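/- Let G = ⟨g₁, g₂⟩ ⊂ (ℂ*)⁵ where g₁ = (1,ξ,ξ,ξ,ξ²), g₂ = (ξ,1,ξ,ξ²,ξ) with ξ = e^{2πi/3}, and let G' = ⟨g₁', g₂'⟩ with g₁' = (1,ξ,ξ,ξ,ξ), g₂' = (ξ,1,ξ,ξ²,ξ²). Then no automorphism of (ℂ*)⁵ given by coordinatewise scaling combined with permutation of the five coordinates conjugates G to G'. -/

import Mathlib

open Complex

/-- `ξ = e^{2πi/3}`. -/
noncomputable def xi3 : ℂ := Complex.exp (2 * Real.pi * Complex.I / 3)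

/-- `ξ` as a unit of `ℂ`. -/
noncomputable def xiu : ℂˣ := Units.mk0 xi3 (Complex.exp_ne_zero _)

/-- `G = ⟨(1,ξ,ξ,ξ,ξ²), (ξ,1,ξ,ξ²,ξ)⟩ ⊂ (ℂ*)⁵`. -/
noncomputable def Gdiag : Set (Fin 5 → ℂˣ) :=
  {g | ∃ m k : ℤ, g = (![1, xiu, xiu, xiu, xiu ^ 2] : Fin 5 → ℂˣ) ^ m *
    (![xiu, 1, xiu, xiu ^ 2, xiu] : Fin 5 → ℂˣ) ^ k}

/-- `G' = ⟨(1,ξ,ξ,ξ,ξ), (ξ,1,ξ,ξ²,ξ²)⟩ ⊂ (ℂ*)⁵`. -/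
noncomputable def Gdiag' : Set (Fin 5 → ℂˣ) :=
  {g | ∃ m k : ℤ, g = (![1, xiu, xiu, xiu, xiu] : Fin 5 → ℂˣ) ^ m *
    (![xiu, 1, xiu, xiu ^ 2, xiu ^ 2] : Fin 5 → ℂˣ) ^ k}

/-!
Diagonal scalings commute with diagonal elements, so only the permutation matters, and a
permutation `σ` carrying `G` onto `G'` would carry equalities of coordinates on `G'` back to
equalities of coordinates on `G`. Every element of `G'` has equal 4th and 5th coordinates,
while any two distinct coordinates are separated by one of the generators of `G`.
-/

def CoordsIdentified {ι M : Type*} (S : Set (ι → M)) (i j : ι) : Prop :=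
  ∀ x ∈ S, x i = x j

lemma CoordsIdentified.of_image_comp {ι M : Type*} {S T : Set (ι → M)} {σ : ι → ι}
    (hST : (fun g => g ∘ σ) '' S = T) {i j : ι} (hT : CoordsIdentified T i j) :
    CoordsIdentified S (σ i) (σ j) := by
  intro x hx
  exact hT (x ∘ σ) (hST ▸ Set.mem_image_of_mem _ hx)

lemma isPrimitiveRoot_xiu : IsPrimitiveRoot xiu 3 := by
  rw [← IsPrimitiveRoot.coe_units_iff]
  simpa [xiu, xi3] using Complex.isPrimitiveRoot_exp 3 (by norm_num)

lemma coordsIdentified_Gdiag'_three_four : CoordsIdentified Gdiag' 3 4 := by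
  rintro _ ⟨m, k, rfl⟩
  simp

lemma not_coordsIdentified_Gdiag {i j : Fin 5} (hij : i ≠ j) :
    ¬ CoordsIdentified Gdiag i j := by
  have hξ1 : xiu ≠ 1 := isPrimitiveRoot_xiu.ne_one (by norm_num)
  have hξ2 : xiu ^ 2 ≠ 1 := isPrimitiveRoot_xiu.pow_ne_one_of_pos_of_lt (by norm_num) (by norm_num)
  have hξ12 : xiu ≠ xiu ^ 2 := fun h => by
    simpa using isPrimitiveRoot_xiu.pow_inj (i := 1) (j := 2) (by norm_num) (by norm_num)
      (by rwa [pow_one])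
  intro hS
  have e₁ := hS _ ⟨1, 0, rfl⟩
  have e₂ := hS _ ⟨0, 1, rfl⟩
  fin_cases i <;> fin_cases j <;> simp_all [eq_comm]

/-- no automorphism of `(ℂ*)⁵` given by coordinatewise scaling combined
with a permutation of the five coordinates conjugates `G` to `G'`. -/
theorem stmt19 :
    ¬ ∃ (σ : Equiv.Perm (Fin 5)) (t : Fin 5 → ℂˣ),
      (fun g : Fin 5 → ℂˣ => t * (fun i => g (σ i)) * t⁻¹) '' Gdiag = Gdiag' := by
  rintro ⟨σ, t, h⟩
  have hσ : (fun g => g ∘ σ) '' Gdiag = Gdiag' := by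
    simp only [mul_inv_cancel_comm] at h
    exact h
  exact not_coordsIdentified_Gdiag (σ.injective.ne (by decide))
    (coordsIdentified_Gdiag'_three_four.of_image_comp hσ)
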